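/- Let U be a nonempty finite set. Then ∑_{A ⊆ U} ∑_{B ⊆ U} ∫_0^1 (1 − λ)^{|A \ B|} / (4 − λ)^{|U|} dλ = 1; that is, the Bayesian-model-averaged transfer prior is a proper probability distribution over ordered pairs of subsets of U. -/

import Mathlib

/-!
For each fixed `λ ∈ [0, 1]` the integrand already sums to one. With `t = 1 - λ` and `B ⊆ U` fixed,
`t ^ |A \ B| = ∏_{x ∈ A} (if x ∈ B then 1 else t)`, so summing over `A ⊆ U` gives
`2 ^ |B| (t + 1) ^ |U \ B|`, and the binomial theorem over `B` turns this into
`(t + 3) ^ |U| = (4 - λ) ^ |U|`. Exchanging the finite sums with the integral leaves `∫₀¹ 1 = 1`.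
-/

open Finset

section

variable {X R : Type*} [DecidableEq X] [CommSemiring R]

theorem prod_ite_mem_one_eq_pow_card_sdiff (t : R) (A B : Finset X) :
    ∏ i ∈ A, (if i ∈ B then 1 else t) = t ^ (A \ B).card := by
  rw [prod_ite, prod_const_one, one_mul, prod_const, sdiff_eq_filter]

theorem sum_powerset_pow_card_sdiff {U B : Finset X} (hB : B ⊆ U) (t : R) :
    ∑ A ∈ U.powerset, t ^ (A \ B).card = 2 ^ B.card * (t + 1) ^ (U.card - B.card) := by
  simp_rw [← prod_ite_mem_one_eq_pow_card_sdiff, ← prod_add_one, apply_ite (· + (1 : R)), prod_ite,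
    prod_const, filter_mem_eq_inter, inter_eq_right.2 hB, ← sdiff_eq_filter, card_sdiff_of_subset hB,
    one_add_one_eq_two]

theorem sum_powerset_sum_powerset_pow_card_sdiff (t : R) (U : Finset X) :
    ∑ A ∈ U.powerset, ∑ B ∈ U.powerset, t ^ (A \ B).card = (t + 3) ^ U.card := by
  rw [sum_comm, sum_congr rfl fun B hB => sum_powerset_pow_card_sdiff (mem_powerset.1 hB) t,
    sum_pow_mul_eq_add_pow]
  ring

end

theorem bma_transfer_prior_sums_to_one_general
    {X : Type*} [DecidableEq X] (U : Finset X) :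
    ∑ A ∈ U.powerset, ∑ B ∈ U.powerset,
        ∫ lam in (0:ℝ)..1, (1 - lam) ^ (A \ B).card / (4 - lam) ^ U.card = 1 := by
  have hden : ∀ lam ∈ Set.uIcc (0:ℝ) 1, (4 - lam) ^ U.card ≠ 0 := fun lam hlam => by
    rw [Set.uIcc_of_le zero_le_one] at hlam
    exact pow_ne_zero _ (by linarith [hlam.2])
  have hcont : ∀ k : ℕ, ContinuousOn (fun lam : ℝ => (1 - lam) ^ k / (4 - lam) ^ U.card)
      (Set.uIcc 0 1) := fun k =>
    ContinuousOn.div (by fun_prop) (by fun_prop) hden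
  calc ∑ A ∈ U.powerset, ∑ B ∈ U.powerset,
          ∫ lam in (0:ℝ)..1, (1 - lam) ^ (A \ B).card / (4 - lam) ^ U.card
      = ∫ lam in (0:ℝ)..1, ∑ A ∈ U.powerset, ∑ B ∈ U.powerset,
          (1 - lam) ^ (A \ B).card / (4 - lam) ^ U.card := by
        rw [intervalIntegral.integral_finsetSum fun A _ =>
          (continuousOn_finsetSum _ fun B _ => hcont (A \ B).card).intervalIntegrable]
        exact sum_congr rfl fun A _ =>
          (intervalIntegral.integral_finsetSum fun B _ => (hcont _).intervalIntegrable).symm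
    _ = ∫ _ in (0:ℝ)..1, (1 : ℝ) := intervalIntegral.integral_congr fun lam hlam => by
        simp only [← sum_div, sum_powerset_sum_powerset_pow_card_sdiff]
        rw [show 1 - lam + 3 = 4 - lam by ring, div_self (hden lam hlam)]
    _ = 1 := by simp

/-- The Bayesian-model-averaged transfer prior is a proper probability
distribution over ordered pairs of subsets of a nonempty finite set `U`:
`∑_{A ⊆ U} ∑_{B ⊆ U} ∫_0^1 (1 - λ)^{|A \ B|} / (4 - λ)^{|U|} dλ = 1`. -/
theorem bma_transfer_prior_sums_to_one
    {X : Type*} [DecidableEq X] (U : Finset X) (hU : U.Nonempty) :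
    ∑ A ∈ U.powerset, ∑ B ∈ U.powerset,
        ∫ lam in (0:ℝ)..1, (1 - lam) ^ (A \ B).card / (4 - lam) ^ U.card = 1 :=
  bma_transfer_prior_sums_to_one_general U
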